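/- arXiv:1903.03580 — 2 statements merged into one kernel-verified Lean document; each statement's English description precedes it below -/
import Mathlib

section
/- Fix s ≥ 0, 0 ≤ b < 1/2, and a sign σ ∈ {+1, −1}. There exist M₀ = M₀(s) and, for each M ≥ M₀, a constant C > 0 such that for every ξ ≠ 0 the integral operator with kernel K³_ξ(η,(θ,λ)) := (⟨ξ² + η²⟩^{s/2} / ⟨ξ² + θ²⟩^{s/2}) · (|η|/|ξ|) · ⟨λ − ξ⁵ + θ²/ξ⟩^{b−1} ⟨(θ² + σ η²)/ξ⟩^{−M} is bounded from L²_{θ,λ}(ℝ²) to L²_η(ℝ) with operator norm at most C, uniformly in ξ. -/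
open MeasureTheory
open scoped ENNReal

/-- Japanese bracket `⟨x⟩ = (1 + x²)^{1/2}`. -/
noncomputable def jap (x : ℝ) : ℝ := Real.sqrt (1 + x ^ 2)

/-- The kernel `K³_ξ(η,(θ,λ))` from the Kato smoothing estimate for the Duhamel term. -/
noncomputable def K3ker (s b M σ ξ η θ lam : ℝ) : ℝ :=
  (jap (ξ ^ 2 + η ^ 2) ^ (s/2) / jap (ξ ^ 2 + θ ^ 2) ^ (s/2)) * (|η| / |ξ|) *
    jap (lam - ξ ^ 5 + θ ^ 2 / ξ) ^ (b - 1) *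
    jap ((θ ^ 2 + σ * η ^ 2) / ξ) ^ (-M)

/-!
The kernel factors as `A(η, θ) · ⟨λ - ξ⁵ + θ²/ξ⟩^{b-1}`. Peetre's inequality, together with
`|η² - θ²| ≤ |θ² + ση²|` and `|ξ| ≤ ⟨ξ² + θ²⟩`, gives `A ≤ 2^{s/4} (|η|/|ξ|) ⟨u⟩^{-2}` with
`u = (θ² + ση²)/ξ` as soon as `M ≥ s/2 + 2`. This majorant has `θ`-integral at most `2π`, since
`|θ² + ση²| ≥ |η| ||θ| - |η||` dominates it by two Cauchy densities, and `η`-integral at most `π`,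
since the substitution `t = η²` turns it into a Cauchy density in `t`. Finally
`∫ ⟨λ - c⟩^{2(b-1)} dλ < ∞` because `b < 1/2`. A weighted Schur test (Cauchy–Schwarz against the
measure `A dθ dλ`, then Tonelli) turns these three bounds into the `L² → L²` bound.
-/

open scoped NNReal
open ProbabilityTheory Real

section SchurTest

variable {X P : Type*} [MeasurableSpace X] [MeasurableSpace P] {μ : Measure X} {ν : Measure P}

theorem sq_lintegral_mul_mul_le {a w F : P → ℝ≥0∞} (ha : Measurable a) (hw : AEMeasurable w ν)
    (hF : AEMeasurable F ν) :
    (∫⁻ p, a p * w p * F p ∂ν) ^ 2 ≤ (∫⁻ p, a p * w p ^ 2 ∂ν) * ∫⁻ p, a p * F p ^ 2 ∂ν := by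
  have hac := withDensity_absolutelyContinuous ν a
  have hCS := ENNReal.lintegral_mul_le_Lp_mul_Lq (ν.withDensity a) Real.HolderConjugate.two_two
    (hw.mono_ac hac) (hF.mono_ac hac)
  rw [lintegral_withDensity_eq_lintegral_mul₀ ha.aemeasurable (hw.mul hF)] at hCS
  simp only [ENNReal.rpow_two, Pi.mul_apply, ← mul_assoc,
    lintegral_withDensity_eq_lintegral_mul₀ ha.aemeasurable (hw.pow_const 2),
    lintegral_withDensity_eq_lintegral_mul₀ ha.aemeasurable (hF.pow_const 2)] at hCS
  calc (∫⁻ p, a p * w p * F p ∂ν) ^ 2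
      ≤ ((∫⁻ p, a p * w p ^ 2 ∂ν) ^ (1 / 2 : ℝ) * (∫⁻ p, a p * F p ^ 2 ∂ν) ^ (1 / 2 : ℝ)) ^ 2 := by
        gcongr
    _ = (∫⁻ p, a p * w p ^ 2 ∂ν) * ∫⁻ p, a p * F p ^ 2 ∂ν := by
        rw [mul_pow, ← ENNReal.rpow_natCast, ← ENNReal.rpow_natCast, ← ENNReal.rpow_mul,
          ← ENNReal.rpow_mul]
        norm_num

theorem lintegral_sq_lintegral_mul_mul_le [SFinite μ] [SFinite ν] {a : X → P → ℝ≥0∞}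
    {w F : P → ℝ≥0∞} {α β : ℝ≥0∞} (ha : Measurable (Function.uncurry a)) (hw : AEMeasurable w ν)
    (hF : AEMeasurable F ν) (hα : ∀ x, ∫⁻ p, a x p * w p ^ 2 ∂ν ≤ α)
    (hβ : ∀ p, ∫⁻ x, a x p ∂μ ≤ β) :
    ∫⁻ x, (∫⁻ p, a x p * w p * F p ∂ν) ^ 2 ∂μ ≤ α * β * ∫⁻ p, F p ^ 2 ∂ν := by
  have hF2 : AEMeasurable (fun p => F p ^ 2) ν := hF.pow_const 2
  have hjoint : AEMeasurable (Function.uncurry fun x p => α * (a x p * F p ^ 2)) (μ.prod ν) :=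
    (ha.aemeasurable.mul
      (hF2.comp_quasiMeasurePreserving Measure.quasiMeasurePreserving_snd)).const_mul α
  calc ∫⁻ x, (∫⁻ p, a x p * w p * F p ∂ν) ^ 2 ∂μ
      ≤ ∫⁻ x, ∫⁻ p, α * (a x p * F p ^ 2) ∂ν ∂μ := lintegral_mono fun x => by
        rw [lintegral_const_mul'' (f := fun p => a x p * F p ^ 2) α
          (ha.of_uncurry_left.aemeasurable.mul hF2)]
        exact (sq_lintegral_mul_mul_le ha.of_uncurry_left hw hF).trans (by gcongr; exact hα x)
    _ = ∫⁻ p, α * (∫⁻ x, a x p ∂μ) * F p ^ 2 ∂ν := by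
        rw [lintegral_lintegral_swap hjoint]
        refine lintegral_congr fun p => ?_
        simp only [← mul_assoc]
        rw [lintegral_mul_const _ (ha.of_uncurry_right.const_mul α),
          lintegral_const_mul _ ha.of_uncurry_right]
    _ ≤ ∫⁻ p, α * β * F p ^ 2 ∂ν := by gcongr with p; exact hβ p
    _ = α * β * ∫⁻ p, F p ^ 2 ∂ν := lintegral_const_mul'' _ hF2

theorem eLpNorm_integral_mul_le_of_enorm_le [SFinite μ] [SFinite ν] {k : X → P → ℝ}
    {a : X → P → ℝ≥0∞} {w : P → ℝ≥0∞} {α β : ℝ≥0∞} {f : P → ℝ}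
    (hk : ∀ x p, ‖k x p‖ₑ ≤ a x p * w p) (ha : Measurable (Function.uncurry a))
    (hw : AEMeasurable w ν) (hα : ∀ x, ∫⁻ p, a x p * w p ^ 2 ∂ν ≤ α)
    (hβ : ∀ p, ∫⁻ x, a x p ∂μ ≤ β) (hf : AEStronglyMeasurable f ν) :
    eLpNorm (fun x => ∫ p, k x p * f p ∂ν) 2 μ ≤ (α * β) ^ (1 / 2 : ℝ) * eLpNorm f 2 ν := by
  have hpointwise : ∀ x, ‖∫ p, k x p * f p ∂ν‖ₑ ≤ ∫⁻ p, a x p * w p * ‖f p‖ₑ ∂ν := fun x =>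
    (enorm_integral_le_lintegral_enorm _).trans <| lintegral_mono fun p => by
      rw [enorm_mul]; gcongr; exact hk x p
  have hschur := lintegral_sq_lintegral_mul_mul_le (μ := μ) ha hw hf.enorm hα hβ
  have h2 : (2 : ℝ≥0∞) = ((2 : ℝ≥0) : ℝ≥0∞) := rfl
  rw [h2, eLpNorm_nnreal_eq_lintegral two_ne_zero, eLpNorm_nnreal_eq_lintegral two_ne_zero]
  push_cast
  rw [← ENNReal.mul_rpow_of_nonneg _ _ (by norm_num : (0 : ℝ) ≤ 1 / 2)]
  gcongr
  simp only [ENNReal.rpow_two]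
  exact (lintegral_mono fun x => by gcongr; exact hpointwise x).trans hschur

end SchurTest

lemma lintegral_ofReal_abs_mul_comp_sq_le (G : ℝ → ℝ≥0∞) :
    ∫⁻ x, ENNReal.ofReal |x| * G (x ^ 2) ≤ ∫⁻ t, G t := by
  have half : ∀ s : Set ℝ, MeasurableSet s → s.InjOn (· ^ 2) →
      ∫⁻ x in s, ENNReal.ofReal |2 * x| * G (x ^ 2) ≤ ∫⁻ t, G t := fun s hs hinj => by
    rw [← lintegral_image_eq_lintegral_abs_deriv_mul hs
      (fun x _ => by simpa using (hasDerivAt_pow 2 x).hasDerivWithinAt) hinj]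
    exact setLIntegral_le_lintegral _ _
  have hinj_nonneg : (Set.Ici (0 : ℝ)).InjOn (· ^ 2) := fun x hx y hy h => by
    simp only [Set.mem_Ici] at hx hy
    nlinarith
  have hinj_neg : (Set.Iio (0 : ℝ)).InjOn (· ^ 2) := fun x hx y hy h => by
    simp only [Set.mem_Iio] at hx hy
    nlinarith
  refine (ENNReal.mul_le_mul_iff_right two_ne_zero ENNReal.ofNat_ne_top).1 ?_
  calc 2 * ∫⁻ x, ENNReal.ofReal |x| * G (x ^ 2)
      = ∫⁻ x, ENNReal.ofReal |2 * x| * G (x ^ 2) := by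
        rw [← lintegral_const_mul' _ _ ENNReal.ofNat_ne_top]
        refine lintegral_congr fun x => ?_
        rw [abs_mul, ENNReal.ofReal_mul (by norm_num), abs_two, ENNReal.ofReal_ofNat, mul_assoc]
    _ = (∫⁻ x in Set.Ici 0, ENNReal.ofReal |2 * x| * G (x ^ 2))
          + ∫⁻ x in Set.Iio 0, ENNReal.ofReal |2 * x| * G (x ^ 2) := by
        rw [← Set.compl_Ici, lintegral_add_compl _ measurableSet_Ici]
    _ ≤ 2 * ∫⁻ t, G t := by
        rw [two_mul]
        exact add_le_add (half _ measurableSet_Ici hinj_nonneg) (half _ measurableSet_Iio hinj_neg)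

lemma inv_one_add_sq_le_of_abs_le {u v : ℝ} (h : |v| ≤ |u|) : (1 + u ^ 2)⁻¹ ≤ (1 + v ^ 2)⁻¹ :=
  inv_anti₀ (by positivity) (by linarith [sq_le_sq.2 h])

lemma jap_pos (x : ℝ) : 0 < jap x := Real.sqrt_pos.2 (by positivity)

lemma jap_rpow (x r : ℝ) : jap x ^ r = (1 + x ^ 2) ^ (r / 2) := by
  rw [jap, Real.sqrt_eq_rpow, ← Real.rpow_mul (by positivity)]
  ring_nf

lemma ofReal_jap_rpow_sq (x r : ℝ) :
    ENNReal.ofReal (jap x ^ r) ^ 2 = ENNReal.ofReal ((1 + x ^ 2) ^ r) := by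
  rw [← ENNReal.ofReal_pow (Real.rpow_nonneg (jap_pos x).le r), jap_rpow,
    ← Real.rpow_mul_natCast (by positivity)]
  ring_nf

lemma one_add_sq_le_of_sq_sub_le {x y t : ℝ} (h : (x - y) ^ 2 ≤ t ^ 2 * (1 + y ^ 2)) :
    1 + x ^ 2 ≤ 2 * (1 + y ^ 2) * (1 + t ^ 2) := by
  nlinarith [sq_nonneg (x - 2 * y), sq_nonneg t, sq_nonneg y]

lemma sq_sub_sq_le_sq_add_mul {σ : ℝ} (hσ : σ = 1 ∨ σ = -1) (η θ : ℝ) :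
    (η ^ 2 - θ ^ 2) ^ 2 ≤ (θ ^ 2 + σ * η ^ 2) ^ 2 := by
  rcases hσ with rfl | rfl <;> nlinarith [sq_nonneg (η * θ)]

lemma abs_mul_abs_sub_abs_le {σ : ℝ} (hσ : σ = 1 ∨ σ = -1) (η θ : ℝ) :
    |η| * |(|θ| - |η|)| ≤ |θ ^ 2 + σ * η ^ 2| := by
  have hθ := sq_abs θ
  have hη := sq_abs η
  rcases hσ with rfl | rfl
  · rw [abs_of_nonneg (by positivity : (0:ℝ) ≤ θ ^ 2 + 1 * η ^ 2)]
    cases abs_cases (|θ| - |η|) <;> nlinarith [abs_nonneg θ, abs_nonneg η]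
  · rw [show θ ^ 2 + -1 * η ^ 2 = (|θ| - |η|) * (|θ| + |η|) by nlinarith, abs_mul,
      abs_of_nonneg (by positivity : (0:ℝ) ≤ |θ| + |η|), mul_comm]
    gcongr
    exact le_add_of_nonneg_left (abs_nonneg θ)

noncomputable def K3majorant (σ ξ η θ : ℝ) : ℝ :=
  |η| / |ξ| * (1 + ((θ ^ 2 + σ * η ^ 2) / ξ) ^ 2)⁻¹

lemma K3ker_nonneg (s b M σ ξ η θ lam : ℝ) : 0 ≤ K3ker s b M σ ξ η θ lam := by
  unfold K3ker jap; positivity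

lemma K3ker_le {s b M σ ξ : ℝ} (hs : 0 ≤ s) (hσ : σ = 1 ∨ σ = -1) (hM : s / 2 + 2 ≤ M)
    (hξ : ξ ≠ 0) (η θ lam : ℝ) :
    K3ker s b M σ ξ η θ lam
      ≤ 2 ^ (s / 4) * K3majorant σ ξ η θ * jap (lam - ξ ^ 5 + θ ^ 2 / ξ) ^ (b - 1) := by
  set u := (θ ^ 2 + σ * η ^ 2) / ξ
  have hu : u ^ 2 * ξ ^ 2 = (θ ^ 2 + σ * η ^ 2) ^ 2 := by simp only [u]; field_simp
  have hbase : 1 + (ξ ^ 2 + η ^ 2) ^ 2 ≤ 2 * (1 + (ξ ^ 2 + θ ^ 2) ^ 2) * (1 + u ^ 2) := by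
    refine one_add_sq_le_of_sq_sub_le ?_
    calc (ξ ^ 2 + η ^ 2 - (ξ ^ 2 + θ ^ 2)) ^ 2 = (η ^ 2 - θ ^ 2) ^ 2 := by ring
      _ ≤ u ^ 2 * ξ ^ 2 := hu ▸ sq_sub_sq_le_sq_add_mul hσ η θ
      _ ≤ u ^ 2 * (1 + (ξ ^ 2 + θ ^ 2) ^ 2) := by
        gcongr; nlinarith [sq_nonneg (ξ ^ 2 - 1), sq_nonneg θ, sq_nonneg ξ]
  have hratio : jap (ξ ^ 2 + η ^ 2) ^ (s / 2) / jap (ξ ^ 2 + θ ^ 2) ^ (s / 2)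
      ≤ 2 ^ (s / 4) * (1 + u ^ 2) ^ (s / 4) := by
    rw [jap_rpow, jap_rpow, div_le_iff₀ (by positivity), show s / 2 / 2 = s / 4 by ring,
      ← Real.mul_rpow (by norm_num) (by positivity), ← Real.mul_rpow (by positivity) (by positivity)]
    gcongr
    linarith
  have hdecay : (1 + u ^ 2) ^ (s / 4) * jap u ^ (-M) ≤ (1 + u ^ 2)⁻¹ := by
    rw [jap_rpow, ← Real.rpow_add (by positivity), ← Real.rpow_neg_one]
    exact Real.rpow_le_rpow_of_exponent_le (by nlinarith [sq_nonneg u]) (by linarith)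
  calc K3ker s b M σ ξ η θ lam
      = jap (ξ ^ 2 + η ^ 2) ^ (s / 2) / jap (ξ ^ 2 + θ ^ 2) ^ (s / 2) * jap u ^ (-M)
          * (|η| / |ξ|) * jap (lam - ξ ^ 5 + θ ^ 2 / ξ) ^ (b - 1) := by unfold K3ker; ring
    _ ≤ 2 ^ (s / 4) * ((1 + u ^ 2) ^ (s / 4) * jap u ^ (-M))
          * (|η| / |ξ|) * jap (lam - ξ ^ 5 + θ ^ 2 / ξ) ^ (b - 1) := by
        rw [← mul_assoc]
        gcongr
        all_goals exact Real.rpow_nonneg (jap_pos _).le _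
    _ ≤ 2 ^ (s / 4) * (1 + u ^ 2)⁻¹ * (|η| / |ξ|) * jap (lam - ξ ^ 5 + θ ^ 2 / ξ) ^ (b - 1) := by
        gcongr
        all_goals exact Real.rpow_nonneg (jap_pos _).le _
    _ = 2 ^ (s / 4) * K3majorant σ ξ η θ * jap (lam - ξ ^ 5 + θ ^ 2 / ξ) ^ (b - 1) := by
        unfold K3majorant; ring

lemma K3majorant_nonneg (σ ξ η θ : ℝ) : 0 ≤ K3majorant σ ξ η θ := by
  unfold K3majorant; positivity

lemma lintegral_K3majorant_eta_le {σ ξ : ℝ} (hσ : σ = 1 ∨ σ = -1) (hξ : ξ ≠ 0) (θ : ℝ) :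
    ∫⁻ η, ENNReal.ofReal (K3majorant σ ξ η θ) ≤ ENNReal.ofReal π := by
  have hsq : ∀ η : ℝ, ((θ ^ 2 + σ * η ^ 2) / ξ) ^ 2 = ((η ^ 2 - -(σ * θ ^ 2)) / |ξ|) ^ 2 := by
    intro η
    rw [div_pow, div_pow, sq_abs]
    rcases hσ with rfl | rfl <;> ring
  have hpt : ∀ η, ENNReal.ofReal (K3majorant σ ξ η θ) = ENNReal.ofReal |η|
      * (ENNReal.ofReal π * cauchyPDF (-(σ * θ ^ 2)) ‖ξ‖₊ (η ^ 2)) := by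
    intro η
    rw [cauchyPDF, ← ENNReal.ofReal_mul pi_pos.le, ← ENNReal.ofReal_mul (abs_nonneg _),
      cauchyPDFReal_def', K3majorant, hsq]
    push_cast
    rw [Real.norm_eq_abs]
    field_simp
  calc ∫⁻ η, ENNReal.ofReal (K3majorant σ ξ η θ)
      ≤ ∫⁻ t, ENNReal.ofReal π * cauchyPDF (-(σ * θ ^ 2)) ‖ξ‖₊ t := by
        simp only [hpt]
        exact lintegral_ofReal_abs_mul_comp_sq_le _
    _ ≤ ENNReal.ofReal π := by
        rw [lintegral_const_mul _ (measurable_cauchyPDF _ _),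
          lintegral_cauchyPDF_eq_one _ (nnnorm_ne_zero_iff.2 hξ), mul_one]

lemma K3majorant_le_cauchy {σ ξ η : ℝ} (hσ : σ = 1 ∨ σ = -1) (hξ : ξ ≠ 0) (hη : η ≠ 0) (θ : ℝ) :
    K3majorant σ ξ η θ ≤ π * (cauchyPDFReal |η| (‖ξ‖₊ / ‖η‖₊) θ
      + cauchyPDFReal (-|η|) (‖ξ‖₊ / ‖η‖₊) θ) := by
  have hξ' : 0 < |ξ| := abs_pos.2 hξ
  have hη' : 0 < |η| := abs_pos.2 hη
  have hcauchy : ∀ x₀, π * cauchyPDFReal x₀ (‖ξ‖₊ / ‖η‖₊) θ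
      = |η| / |ξ| * (1 + (|η| / |ξ| * (θ - x₀)) ^ 2)⁻¹ := fun x₀ => by
    rw [cauchyPDFReal_def']
    push_cast
    simp only [Real.norm_eq_abs]
    field_simp
  have hlow : |η| / |ξ| * |(|θ| - |η|)| ≤ |(θ ^ 2 + σ * η ^ 2) / ξ| := by
    rw [abs_div, div_mul_eq_mul_div]
    gcongr
    exact abs_mul_abs_sub_abs_le hσ η θ
  rw [mul_add, hcauchy, hcauchy, K3majorant, ← mul_add]
  gcongr
  rw [← abs_of_pos (div_pos hη' hξ'), ← abs_mul] at hlow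
  rcases le_or_gt 0 θ with hθ | hθ
  · rw [abs_of_nonneg hθ] at hlow
    exact (inv_one_add_sq_le_of_abs_le hlow).trans (le_add_of_nonneg_right (by positivity))
  · rw [abs_of_neg hθ, show -θ - |η| = -(θ - -|η|) by ring, mul_neg, abs_neg] at hlow
    exact (inv_one_add_sq_le_of_abs_le hlow).trans (le_add_of_nonneg_left (by positivity))

lemma lintegral_K3majorant_theta_le {σ ξ : ℝ} (hσ : σ = 1 ∨ σ = -1) (hξ : ξ ≠ 0) (η : ℝ) :
    ∫⁻ θ, ENNReal.ofReal (K3majorant σ ξ η θ) ≤ ENNReal.ofReal (2 * π) := by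
  rcases eq_or_ne η 0 with rfl | hη
  · simp [K3majorant]
  have hγ : ‖ξ‖₊ / ‖η‖₊ ≠ 0 := div_ne_zero (nnnorm_ne_zero_iff.2 hξ) (nnnorm_ne_zero_iff.2 hη)
  calc ∫⁻ θ, ENNReal.ofReal (K3majorant σ ξ η θ)
      ≤ ∫⁻ θ, ENNReal.ofReal π * (cauchyPDF |η| (‖ξ‖₊ / ‖η‖₊) θ
          + cauchyPDF (-|η|) (‖ξ‖₊ / ‖η‖₊) θ) := lintegral_mono fun θ => by
        rw [cauchyPDF, cauchyPDF, ← ENNReal.ofReal_add (cauchyPDF_pos _ hγ _).le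
          (cauchyPDF_pos _ hγ _).le, ← ENNReal.ofReal_mul pi_pos.le]
        exact ENNReal.ofReal_le_ofReal (K3majorant_le_cauchy hσ hξ hη θ)
    _ = ENNReal.ofReal (2 * π) := by
        rw [lintegral_const_mul' _ _ ENNReal.ofReal_ne_top,
          lintegral_add_left (measurable_cauchyPDF _ _), lintegral_cauchyPDF_eq_one _ hγ,
          lintegral_cauchyPDF_eq_one _ hγ, ENNReal.ofReal_mul zero_le_two, mul_comm]
        norm_num

lemma lintegral_ofReal_jap_sub_rpow_sq (c r : ℝ) :
    ∫⁻ lam, ENNReal.ofReal (jap (lam - c) ^ r) ^ 2 = ∫⁻ x, ENNReal.ofReal ((1 + x ^ 2) ^ r) := by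
  simp only [ofReal_jap_rpow_sq]
  exact lintegral_sub_right_eq_self (fun x => ENNReal.ofReal ((1 + x ^ 2) ^ r)) c

lemma lintegral_ofReal_one_add_sq_rpow_lt_top {r : ℝ} (hr : r < -1 / 2) :
    ∫⁻ x : ℝ, ENNReal.ofReal ((1 + x ^ 2) ^ r) < ∞ := by
  have h := integrable_rpow_neg_one_add_norm_sq (E := ℝ) (μ := volume) (r := -2 * r)
    (by simp; linarith)
  simp only [Real.norm_eq_abs, sq_abs, show -(-2 * r) / 2 = r by ring] at h
  exact h.lintegral_lt_top

lemma lintegral_ofReal_one_add_sq_rpow_pos (r : ℝ) :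
    0 < ∫⁻ x : ℝ, ENNReal.ofReal ((1 + x ^ 2) ^ r) := by
  rw [lintegral_pos_iff_support (by fun_prop)]
  simp [Function.support, Real.rpow_pos_of_pos (by positivity : (0:ℝ) < 1 + _ ^ 2)]

lemma lintegral_K3majorant_mul_sq_le {σ ξ : ℝ} (hσ : σ = 1 ∨ σ = -1) (hξ : ξ ≠ 0) (b η : ℝ) :
    ∫⁻ p : ℝ × ℝ, ENNReal.ofReal (K3majorant σ ξ η p.1)
        * ENNReal.ofReal (jap (p.2 - ξ ^ 5 + p.1 ^ 2 / ξ) ^ (b - 1)) ^ 2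
      ≤ ENNReal.ofReal (2 * π) * ∫⁻ x : ℝ, ENNReal.ofReal ((1 + x ^ 2) ^ (b - 1)) := by
  have hmaj : Measurable fun θ => ENNReal.ofReal (K3majorant σ ξ η θ) := by
    unfold K3majorant; fun_prop
  rw [Measure.volume_eq_prod, lintegral_prod _ (by unfold K3majorant jap; fun_prop)]
  calc ∫⁻ θ, ∫⁻ lam, ENNReal.ofReal (K3majorant σ ξ η θ)
        * ENNReal.ofReal (jap (lam - ξ ^ 5 + θ ^ 2 / ξ) ^ (b - 1)) ^ 2
      = ∫⁻ θ, ENNReal.ofReal (K3majorant σ ξ η θ)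
          * ∫⁻ x : ℝ, ENNReal.ofReal ((1 + x ^ 2) ^ (b - 1)) := lintegral_congr fun θ => by
        rw [lintegral_const_mul' _ _ ENNReal.ofReal_ne_top,
          ← lintegral_ofReal_jap_sub_rpow_sq (ξ ^ 5 - θ ^ 2 / ξ)]
        simp only [sub_sub_eq_add_sub, sub_add_eq_add_sub]
    _ ≤ ENNReal.ofReal (2 * π) * ∫⁻ x : ℝ, ENNReal.ofReal ((1 + x ^ 2) ^ (b - 1)) := by
        rw [lintegral_mul_const _ hmaj]
        gcongr
        exact lintegral_K3majorant_theta_le hσ hξ η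

lemma enorm_K3ker_le {s b M σ ξ : ℝ} (hs : 0 ≤ s) (hσ : σ = 1 ∨ σ = -1) (hM : s / 2 + 2 ≤ M)
    (hξ : ξ ≠ 0) (η θ lam : ℝ) :
    ‖K3ker s b M σ ξ η θ lam‖ₑ ≤ ENNReal.ofReal (2 ^ (s / 4)) * ENNReal.ofReal (K3majorant σ ξ η θ)
      * ENNReal.ofReal (jap (lam - ξ ^ 5 + θ ^ 2 / ξ) ^ (b - 1)) := by
  rw [Real.enorm_eq_ofReal (K3ker_nonneg _ _ _ _ _ _ _ _), ← ENNReal.ofReal_mul (by positivity),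
    ← ENNReal.ofReal_mul (by positivity [K3majorant_nonneg σ ξ η θ])]
  exact ENNReal.ofReal_le_ofReal (K3ker_le hs hσ hM hξ η θ lam)

theorem stmt14_general (s b σ : ℝ) (hs : 0 ≤ s) (hb1 : b < 1/2)
    (hσ : σ = 1 ∨ σ = -1) :
    ∃ M₀ : ℝ, ∀ M : ℝ, M₀ ≤ M → ∃ C > (0:ℝ), ∀ ξ : ℝ, ξ ≠ 0 →
      ∀ f : ℝ × ℝ → ℝ, MemLp f 2 volume →
        eLpNorm (fun η : ℝ => ∫ p : ℝ × ℝ, K3ker s b M σ ξ η p.1 p.2 * f p) 2 volume ≤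
          ENNReal.ofReal C * eLpNorm f 2 volume := by
  set c := ENNReal.ofReal (2 ^ (s / 4))
  set Cb := ∫⁻ x : ℝ, ENNReal.ofReal ((1 + x ^ 2) ^ (b - 1))
  set α := c * (ENNReal.ofReal (2 * π) * Cb)
  set β := c * ENNReal.ofReal π
  have hCb := lintegral_ofReal_one_add_sq_rpow_lt_top (r := b - 1) (by linarith)
  have hC : 0 < ((α * β) ^ (1 / 2 : ℝ)).toReal := by
    have := lintegral_ofReal_one_add_sq_rpow_pos (b - 1)
    refine ENNReal.toReal_pos ?_ ?_ <;>
      simp [α, β, c, Cb, pi_pos, Real.rpow_pos_of_pos two_pos, this.ne', hCb.ne, ENNReal.mul_eq_top]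
  refine ⟨s / 2 + 2, fun M hM => ⟨_, hC, fun ξ hξ f hf => ?_⟩⟩
  rw [ENNReal.ofReal_toReal (ENNReal.toReal_pos_iff.1 hC).2.ne]
  refine eLpNorm_integral_mul_le_of_enorm_le (fun η p => enorm_K3ker_le hs hσ hM hξ η p.1 p.2)
    (by unfold K3majorant; fun_prop) (by unfold jap; fun_prop) (fun η => ?_) (fun p => ?_) hf.1
  · simp only [mul_assoc]
    rw [lintegral_const_mul' _ _ ENNReal.ofReal_ne_top]
    exact mul_le_mul' le_rfl (lintegral_K3majorant_mul_sq_le hσ hξ b η)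
  · rw [lintegral_const_mul' _ _ ENNReal.ofReal_ne_top]
    exact mul_le_mul' le_rfl (lintegral_K3majorant_eta_le hσ hξ p.1)

/-- For `s ≥ 0`, `0 ≤ b < 1/2`, a sign `σ = ±1`, and `M` large enough depending on `s`,
the integral operator with kernel `K³_ξ` is bounded from `L²_{θ,λ}(ℝ²)` to `L²_η(ℝ)`
uniformly in `ξ ≠ 0`. -/
theorem stmt14 (s b σ : ℝ) (hs : 0 ≤ s) (hb0 : 0 ≤ b) (hb1 : b < 1/2)
    (hσ : σ = 1 ∨ σ = -1) :
    ∃ M₀ : ℝ, ∀ M : ℝ, M₀ ≤ M → ∃ C > (0:ℝ), ∀ ξ : ℝ, ξ ≠ 0 →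
      ∀ f : ℝ × ℝ → ℝ, MemLp f 2 volume →
        eLpNorm (fun η : ℝ => ∫ p : ℝ × ℝ, K3ker s b M σ ξ η p.1 p.2 * f p) 2 volume ≤
          ENNReal.ofReal C * eLpNorm f 2 volume :=
  stmt14_general s b σ hs hb1 hσ
end

section
/- Let ξ, ξ₁, θ, θ₁ ∈ ℝ with ξ ≠ 0, ξ₁ ≠ 0, and ξ ≠ ξ₁. Then one has the resonance identity ξ₁⁵ + (ξ−ξ₁)⁵ − ξ⁵ + θ²/ξ − θ₁²/ξ₁ − (θ−θ₁)²/(ξ−ξ₁) = −5 ξ ξ₁ (ξ−ξ₁)(ξ² − ξξ₁ + ξ₁²) − (θξ₁ − θ₁ξ)² / (ξ ξ₁ (ξ−ξ₁)), and moreover, since both summands on the right have the same sign, |ξ₁⁵ + (ξ−ξ₁)⁵ − ξ⁵ + θ²/ξ − θ₁²/ξ₁ − (θ−θ₁)²/(ξ−ξ₁)| ≥ (5/2) |ξ ξ₁ (ξ−ξ₁)| (ξ² + ξ₁²) + (θξ₁ − θ₁ξ)² / |ξ ξ₁ (ξ−ξ₁)|. -/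
/-!
Writing `P = ξξ₁(ξ-ξ₁)`, clearing denominators turns the resonance function into
`-(5(ξ² - ξξ₁ + ξ₁²) P + (θξ₁ - θ₁ξ)² / P)`. Both summands have the sign of `P`, so the absolute
value is the sum of the absolute values, and `ξ² - ξξ₁ + ξ₁² ≥ (ξ² + ξ₁²)/2`.
-/

theorem kp5_resonance_eq {K : Type*} [Field K] (ξ ξ₁ θ θ₁ : K) (hξ : ξ ≠ 0) (hξ₁ : ξ₁ ≠ 0)
    (hne : ξ ≠ ξ₁) :
    ξ₁ ^ 5 + (ξ - ξ₁) ^ 5 - ξ ^ 5 + θ ^ 2 / ξ - θ₁ ^ 2 / ξ₁ - (θ - θ₁) ^ 2 / (ξ - ξ₁) =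
      -(5 * ξ * ξ₁ * (ξ - ξ₁) * (ξ ^ 2 - ξ * ξ₁ + ξ₁ ^ 2)) -
        (θ * ξ₁ - θ₁ * ξ) ^ 2 / (ξ * ξ₁ * (ξ - ξ₁)) := by
  have hd : ξ - ξ₁ ≠ 0 := sub_ne_zero.mpr hne
  field_simp
  ring

theorem abs_mul_add_div_self {K : Type*} [Field K] [LinearOrder K] [IsStrictOrderedRing K]
    {a Q : K} (P : K) (ha : 0 ≤ a) (hQ : 0 ≤ Q) :
    |a * P + Q / P| = a * |P| + Q / |P| := by
  rcases eq_or_ne P 0 with rfl | hP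
  · simp
  have hpos : 0 ≤ a + Q / P ^ 2 := by positivity
  have hP' : |P| ≠ 0 := abs_ne_zero.mpr hP
  calc |a * P + Q / P| = |(a + Q / P ^ 2) * P| := by congr 1; field_simp
    _ = (a + Q / P ^ 2) * |P| := by rw [abs_mul, abs_of_nonneg hpos]
    _ = a * |P| + Q / |P| := by rw [← sq_abs P]; field_simp

theorem half_sq_add_sq_le_sq_sub_mul_add_sq {K : Type*} [Field K] [LinearOrder K]
    [IsStrictOrderedRing K] (x y : K) :
    (x ^ 2 + y ^ 2) / 2 ≤ x ^ 2 - x * y + y ^ 2 := by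
  nlinarith [sq_nonneg (x - y)]

/-- The resonance identity for the fifth order KP–II equation and the resulting lower bound:
for `ξ, ξ₁ ≠ 0` with `ξ ≠ ξ₁`,
`ξ₁⁵ + (ξ−ξ₁)⁵ − ξ⁵ + θ²/ξ − θ₁²/ξ₁ − (θ−θ₁)²/(ξ−ξ₁)
  = −5ξξ₁(ξ−ξ₁)(ξ² − ξξ₁ + ξ₁²) − (θξ₁ − θ₁ξ)²/(ξξ₁(ξ−ξ₁))`,
and since both summands have the same sign,
the absolute value is at least `(5/2)|ξξ₁(ξ−ξ₁)|(ξ² + ξ₁²) + (θξ₁ − θ₁ξ)²/|ξξ₁(ξ−ξ₁)|`. -/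
theorem stmt15 (ξ ξ₁ θ θ₁ : ℝ) (hξ : ξ ≠ 0) (hξ₁ : ξ₁ ≠ 0) (hne : ξ ≠ ξ₁) :
    (ξ₁ ^ 5 + (ξ - ξ₁) ^ 5 - ξ ^ 5 + θ ^ 2 / ξ - θ₁ ^ 2 / ξ₁ - (θ - θ₁) ^ 2 / (ξ - ξ₁) =
      -(5 * ξ * ξ₁ * (ξ - ξ₁) * (ξ ^ 2 - ξ * ξ₁ + ξ₁ ^ 2)) -
        (θ * ξ₁ - θ₁ * ξ) ^ 2 / (ξ * ξ₁ * (ξ - ξ₁))) ∧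
    (5/2) * |ξ * ξ₁ * (ξ - ξ₁)| * (ξ ^ 2 + ξ₁ ^ 2) +
        (θ * ξ₁ - θ₁ * ξ) ^ 2 / |ξ * ξ₁ * (ξ - ξ₁)| ≤
      |ξ₁ ^ 5 + (ξ - ξ₁) ^ 5 - ξ ^ 5 + θ ^ 2 / ξ - θ₁ ^ 2 / ξ₁ - (θ - θ₁) ^ 2 / (ξ - ξ₁)| := by
  have hres := kp5_resonance_eq ξ ξ₁ θ θ₁ hξ hξ₁ hne
  refine ⟨hres, ?_⟩
  set P := ξ * ξ₁ * (ξ - ξ₁)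
  set A := 5 * (ξ ^ 2 - ξ * ξ₁ + ξ₁ ^ 2)
  have hA : 5 * ((ξ ^ 2 + ξ₁ ^ 2) / 2) ≤ A :=
    mul_le_mul_of_nonneg_left (half_sq_add_sq_le_sq_sub_mul_add_sq ξ ξ₁) (by norm_num)
  have hsplit : -(5 * ξ * ξ₁ * (ξ - ξ₁) * (ξ ^ 2 - ξ * ξ₁ + ξ₁ ^ 2)) -
      (θ * ξ₁ - θ₁ * ξ) ^ 2 / P = -(A * P + (θ * ξ₁ - θ₁ * ξ) ^ 2 / P) := by ring
  rw [hres, hsplit, abs_neg,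
    abs_mul_add_div_self P (le_trans (by positivity) hA) (sq_nonneg _)]
  calc (5 / 2) * |P| * (ξ ^ 2 + ξ₁ ^ 2) + (θ * ξ₁ - θ₁ * ξ) ^ 2 / |P|
      = 5 * ((ξ ^ 2 + ξ₁ ^ 2) / 2) * |P| + (θ * ξ₁ - θ₁ * ξ) ^ 2 / |P| := by ring
    _ ≤ A * |P| + (θ * ξ₁ - θ₁ * ξ) ^ 2 / |P| := by gcongr
end
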